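/- Let F : ℝ^d → ℝ be three times continuously differentiable with ‖D³F(y)‖ ≤ M for all y ∈ ℝ^d. Let c > 0, let 1 ≤ i ≤ d, and let Δ(1), …, Δ(d) be independent random variables each taking values +1 and −1 with probability 1/2. Then for every x ∈ ℝ^d, the mean-squared error of the SPSA gradient estimator satisfies E[((F(x + cΔ) − F(x − cΔ))/(2c Δ(i)) − ∂F(x)/∂x(i))²] ≤ ( (Σ_{j ≠ i} (∂F(x)/∂x(j))²)^{1/2} + (M d^{3/2}/6) c² )². -/

import Mathlib

open MeasureTheory ProbabilityTheory

/-!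
Write `v = Δ` and `L = DF(x)`. Taylor's formula with integral remainder applied at `x ± c v` makes
the even-order terms cancel, so `F(x + c v) - F(x - c v) = 2c L v + R` with
`|R| ≤ M ‖c v‖³ / 3 = M d^{3/2} c³ / 3`. Since `1 / Δ(i) = Δ(i)`, the estimator minus `∂F(x)/∂x(i)`
is `A + R Δ(i) / (2c)`, where `A = Δ(i) ∑_{j ≠ i} Δ(j) ∂F(x)/∂x(j)`. The `Δ(j)` are orthonormal
in `L²`, so `E[A²] = ∑_{j ≠ i} (∂F(x)/∂x(j))²`, and the bounded perturbation `R Δ(i) / (2c)` can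
add at most its sup-norm to the `L²`-norm of `A`.
-/

section Taylor

variable {E : Type*} [NormedAddCommGroup E] [NormedSpace ℝ E] {f : E → ℝ} {M : ℝ}

lemma abs_integral_taylor_remainder_le (hM : ∀ y, ‖iteratedFDeriv ℝ 3 f y‖ ≤ M) (x y : E) :
    |∫ t in (0 : ℝ)..1, (1 - t) ^ 2 • iteratedFDeriv ℝ 3 f (x + t • y) (fun _ => y)|
      ≤ M * ‖y‖ ^ 3 / 3 := by
  have hbound : ∀ t ∈ Set.Ioc (0 : ℝ) 1,
      ‖(1 - t) ^ 2 • iteratedFDeriv ℝ 3 f (x + t • y) (fun _ => y)‖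
        ≤ (1 - t) ^ 2 * (M * ‖y‖ ^ 3) := by
    intro t _
    rw [norm_smul, Real.norm_of_nonneg (sq_nonneg _)]
    gcongr
    calc ‖iteratedFDeriv ℝ 3 f (x + t • y) (fun _ => y)‖
        ≤ ‖iteratedFDeriv ℝ 3 f (x + t • y)‖ * ∏ _ : Fin 3, ‖y‖ :=
          (iteratedFDeriv ℝ 3 f (x + t • y)).le_opNorm _
      _ ≤ M * ‖y‖ ^ 3 := by
          rw [Finset.prod_const, Finset.card_univ, Fintype.card_fin]
          gcongr
          exact hM _
  have hpoly : ∫ t in (0 : ℝ)..1, (1 - t) ^ 2 = 1 / 3 := by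
    simp [intervalIntegral.integral_comp_sub_left (fun t : ℝ => t ^ 2)]
    norm_num
  have h := intervalIntegral.norm_integral_le_of_norm_le zero_le_one (μ := volume)
    (Filter.Eventually.of_forall hbound) ((by fun_prop : Continuous _).intervalIntegrable _ _)
  rw [intervalIntegral.integral_mul_const, hpoly] at h
  rw [← Real.norm_eq_abs]
  linarith

lemma abs_sub_sub_two_mul_fderiv_le (hf : ContDiff ℝ 3 f)
    (hM : ∀ y, ‖iteratedFDeriv ℝ 3 f y‖ ≤ M) (x y : E) :
    |f (x + y) - f (x - y) - 2 * fderiv ℝ f x y| ≤ M * ‖y‖ ^ 3 / 3 := by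
  have taylor (z : E) : f (x + z) = f x + fderiv ℝ f x z + iteratedFDeriv ℝ 2 f x (fun _ => z) / 2
      + (∫ t in (0 : ℝ)..1, (1 - t) ^ 2 • iteratedFDeriv ℝ 3 f (x + t • z) (fun _ => z)) / 2 := by
    rw [map_add_eq_sum_add_integral_iteratedFDeriv (n := 2) fun _ _ => hf.contDiffAt]
    simp only [Finset.sum_range_succ, Finset.sum_range_zero, iteratedFDeriv_zero_apply,
      iteratedFDeriv_one_apply, smul_eq_mul]
    norm_num
    ring
  have hneg : iteratedFDeriv ℝ 2 f x (fun _ => -y) = iteratedFDeriv ℝ 2 f x (fun _ => y) := by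
    simpa using (iteratedFDeriv ℝ 2 f x).map_smul_univ (fun _ => (-1 : ℝ)) (fun _ => y)
  have h1 := abs_integral_taylor_remainder_le hM x y
  have h2 := abs_integral_taylor_remainder_le hM x (-y)
  rw [norm_neg] at h2
  rw [sub_eq_add_neg x, taylor, taylor, hneg, map_neg]
  rw [abs_le] at h1 h2 ⊢
  constructor <;> linarith

end Taylor

section SecondMoments

variable {Ω : Type*} [MeasurableSpace Ω] {μ : Measure Ω}

lemma integral_sq_le_of_abs_sub_le [IsProbabilityMeasure μ] {X A : Ω → ℝ} {b : ℝ}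
    (hA : MemLp A 2 μ) (hXA : ∀ ω, |X ω - A ω| ≤ b) :
    ∫ ω, X ω ^ 2 ∂μ ≤ (√(∫ ω, A ω ^ 2 ∂μ) + b) ^ 2 := by
  obtain ⟨ω₀⟩ := nonempty_of_isProbabilityMeasure μ
  have hb : 0 ≤ b := (abs_nonneg _).trans (hXA ω₀)
  have hpointwise : ∀ ω, X ω ^ 2 ≤ A ω ^ 2 + 2 * b * |A ω| + b ^ 2 := by
    intro ω
    have hcross : A ω * (X ω - A ω) ≤ |A ω| * b := by
      calc A ω * (X ω - A ω) ≤ |A ω * (X ω - A ω)| := le_abs_self _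
        _ ≤ |A ω| * b := by rw [abs_mul]; exact mul_le_mul_of_nonneg_left (hXA ω) (abs_nonneg _)
    have hsq : (X ω - A ω) ^ 2 ≤ b ^ 2 := sq_le_sq' (abs_le.1 (hXA ω)).1 (abs_le.1 (hXA ω)).2
    nlinarith
  have hA_abs : Integrable (fun ω => |A ω|) μ := (hA.integrable one_le_two).abs
  -- Jensen's inequality `(E|A|)² ≤ E[A²]`, read off from the nonnegativity of the variance.
  have hjensen : ∫ ω, |A ω| ∂μ ≤ √(∫ ω, A ω ^ 2 ∂μ) := by
    have hvar := variance_eq_sub hA.abs ▸ variance_nonneg |A| μ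
    simp only [Pi.pow_apply, Pi.abs_apply, sq_abs] at hvar
    exact Real.le_sqrt_of_sq_le (by linarith)
  calc ∫ ω, X ω ^ 2 ∂μ ≤ ∫ ω, (A ω ^ 2 + 2 * b * |A ω| + b ^ 2) ∂μ :=
        integral_mono_of_nonneg (ae_of_all _ fun ω => sq_nonneg _)
          ((hA.integrable_sq.add (hA_abs.const_mul _)).add (integrable_const _))
          (ae_of_all _ hpointwise)
    _ = ∫ ω, A ω ^ 2 ∂μ + 2 * b * ∫ ω, |A ω| ∂μ + b ^ 2 := by
        rw [integral_add (f := fun ω => A ω ^ 2 + 2 * b * |A ω|)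
            (hA.integrable_sq.add (hA_abs.const_mul _)) (integrable_const _),
          integral_add (f := fun ω => A ω ^ 2) hA.integrable_sq (hA_abs.const_mul _),
          integral_const_mul]
        simp
    _ ≤ ∫ ω, A ω ^ 2 ∂μ + 2 * b * √(∫ ω, A ω ^ 2 ∂μ) + b ^ 2 := by gcongr
    _ = (√(∫ ω, A ω ^ 2 ∂μ) + b) ^ 2 := by
        rw [add_sq, Real.sq_sqrt (integral_nonneg fun ω => sq_nonneg _)]
        ring

lemma integral_sq_sum_mul_eq_sum_sq {ι : Type*} [DecidableEq ι] (s : Finset ι) (a : ι → ℝ)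
    {X : ι → Ω → ℝ} (hX : ∀ j, MemLp (X j) 2 μ)
    (horth : ∀ j k, ∫ ω, X j ω * X k ω ∂μ = if j = k then 1 else 0) :
    ∫ ω, (∑ j ∈ s, a j * X j ω) ^ 2 ∂μ = ∑ j ∈ s, a j ^ 2 := by
  have hint : ∀ j k, Integrable (fun ω => a j * a k * (X j ω * X k ω)) μ :=
    fun j k => ((hX j).integrable_mul (hX k)).const_mul _
  calc ∫ ω, (∑ j ∈ s, a j * X j ω) ^ 2 ∂μ
      = ∫ ω, ∑ j ∈ s, ∑ k ∈ s, a j * a k * (X j ω * X k ω) ∂μ := by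
        congr with ω
        rw [sq, Finset.sum_mul_sum]
        exact Finset.sum_congr rfl fun j _ => Finset.sum_congr rfl fun k _ => by ring
    _ = ∑ j ∈ s, ∑ k ∈ s, a j * a k * ∫ ω, X j ω * X k ω ∂μ := by
        rw [integral_finsetSum _ fun j _ => integrable_finsetSum _ fun k _ => hint j k]
        refine Finset.sum_congr rfl fun j _ => ?_
        rw [integral_finsetSum _ fun k _ => hint j k]
        exact Finset.sum_congr rfl fun k _ => integral_const_mul _ _
    _ = ∑ j ∈ s, a j ^ 2 := by
        simp_rw [horth, mul_ite, mul_one, mul_zero, Finset.sum_ite_eq, sq]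
        exact Finset.sum_congr rfl fun j hj => if_pos hj

end SecondMoments

section Rademacher

variable {Ω : Type*} [MeasurableSpace Ω] {μ : Measure Ω} [IsProbabilityMeasure μ]

lemma memLp_of_sign {X : Ω → ℝ} (hX : Measurable X) (hval : ∀ ω, X ω = 1 ∨ X ω = -1)
    (p : ENNReal) : MemLp X p μ :=
  MemLp.of_bound hX.aestronglyMeasurable 1 <| ae_of_all _ fun ω => by
    rcases hval ω with h | h <;> simp [h]

lemma integral_eq_zero_of_sign {X : Ω → ℝ} (hX : Measurable X)
    (hval : ∀ ω, X ω = 1 ∨ X ω = -1) (hhalf : μ {ω | X ω = 1} = 1 / 2) :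
    ∫ ω, X ω ∂μ = 0 := by
  have hms : MeasurableSet {ω | X ω = 1} := hX (measurableSet_singleton 1)
  have hX_eq : X = fun ω => Set.indicator {ω | X ω = 1} (fun _ => (2 : ℝ)) ω - 1 := by
    funext ω
    by_cases hω : X ω = 1
    · rw [Set.indicator_of_mem (show ω ∈ {ω | X ω = 1} from hω), hω]; norm_num
    · rw [Set.indicator_of_notMem (show ω ∉ {ω | X ω = 1} from hω), (hval ω).resolve_left hω]
      norm_num
  rw [hX_eq, integral_sub ((integrable_const (2 : ℝ)).indicator hms) (integrable_const 1),
    integral_indicator hms, setIntegral_const, integral_const, measureReal_def, measureReal_def,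
    hhalf, measure_univ, ENNReal.toReal_div]
  norm_num

lemma integral_mul_eq_ite_of_iIndepFun {ι : Type*} [DecidableEq ι] {X : ι → Ω → ℝ}
    (hX : ∀ j, Measurable (X j)) (hindep : iIndepFun X μ)
    (hval : ∀ j ω, X j ω = 1 ∨ X j ω = -1) (hhalf : ∀ j, μ {ω | X j ω = 1} = 1 / 2) (j k : ι) :
    ∫ ω, X j ω * X k ω ∂μ = if j = k then 1 else 0 := by
  split_ifs with hjk
  · subst hjk
    have hsq : ∀ ω, X j ω * X j ω = 1 := fun ω => by rcases hval j ω with h | h <;> simp [h]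
    simp [hsq]
  · have h := (hindep.indepFun hjk).integral_mul_eq_mul_integral (hX j).aestronglyMeasurable
      (hX k).aestronglyMeasurable
    rw [Pi.mul_def] at h
    rw [h, integral_eq_zero_of_sign (hX j) (hval j) (hhalf j), zero_mul]

end Rademacher

section SignVector

variable {ι : Type*} [Fintype ι]

lemma EuclideanSpace.norm_equiv_symm_of_sign {s : ι → ℝ} (hs : ∀ j, s j = 1 ∨ s j = -1) :
    ‖(WithLp.equiv 2 (ι → ℝ)).symm s‖ = √(Fintype.card ι) := by
  rw [EuclideanSpace.norm_eq]
  congr 1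
  have h1 : ∀ j, s j ^ 2 = 1 := fun j => by rcases hs j with h | h <;> simp [h]
  simp [h1]

lemma ContinuousLinearMap.apply_equiv_symm_eq_sum [DecidableEq ι]
    (L : EuclideanSpace ℝ ι →L[ℝ] ℝ) (s : ι → ℝ) :
    L ((WithLp.equiv 2 (ι → ℝ)).symm s) = ∑ j, L (EuclideanSpace.single j 1) * s j := by
  conv_lhs => rw [← (EuclideanSpace.basisFun ι ℝ).sum_repr ((WithLp.equiv 2 (ι → ℝ)).symm s)]
  simp [mul_comm]

end SignVector

theorem abs_spsa_estimator_sub_le {d : ℕ} {F : EuclideanSpace ℝ (Fin d) → ℝ} (hF : ContDiff ℝ 3 F)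
    {M : ℝ} (hM : ∀ y, ‖iteratedFDeriv ℝ 3 F y‖ ≤ M) {c : ℝ} (hc : 0 < c) (i : Fin d)
    (x : EuclideanSpace ℝ (Fin d)) {s : Fin d → ℝ} (hs : ∀ j, s j = 1 ∨ s j = -1) :
    |(F (x + c • (WithLp.equiv 2 (Fin d → ℝ)).symm s) -
          F (x - c • (WithLp.equiv 2 (Fin d → ℝ)).symm s)) / (2 * c * s i) -
        fderiv ℝ F x (EuclideanSpace.single i 1) -
        s i * ∑ j ∈ Finset.univ.erase i, fderiv ℝ F x (EuclideanSpace.single j 1) * s j|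
      ≤ M * (d : ℝ) ^ ((3 : ℝ) / 2) / 6 * c ^ 2 := by
  set v := (WithLp.equiv 2 (Fin d → ℝ)).symm s
  set L := fderiv ℝ F x
  have htaylor := abs_sub_sub_two_mul_fderiv_le hF hM x (c • v)
  rw [norm_smul, EuclideanSpace.norm_equiv_symm_of_sign hs, Fintype.card_fin,
    Real.norm_of_nonneg hc.le, map_smul, smul_eq_mul, ← mul_assoc] at htaylor
  have hsq : s i * s i = 1 := by rcases hs i with h | h <;> simp [h]
  have hsi : s i ≠ 0 := left_ne_zero_of_mul_eq_one hsq
  have hLv : L v = L (EuclideanSpace.single i 1) * s i +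
      ∑ j ∈ Finset.univ.erase i, L (EuclideanSpace.single j 1) * s j := by
    rw [L.apply_equiv_symm_eq_sum, ← Finset.add_sum_erase _ _ (Finset.mem_univ i)]
  have herror : (F (x + c • v) - F (x - c • v)) / (2 * c * s i) - L (EuclideanSpace.single i 1) -
        s i * ∑ j ∈ Finset.univ.erase i, L (EuclideanSpace.single j 1) * s j
      = (F (x + c • v) - F (x - c • v) - 2 * c * L v) * s i / (2 * c) := by
    rw [hLv]
    field_simp
    linear_combination
      (2 * c * s i * L (EuclideanSpace.single i 1) - F (x + c • v) + F (x - c • v)) * hsq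
  have hpow : √(d : ℝ) ^ 3 = (d : ℝ) ^ ((3 : ℝ) / 2) := by
    rw [Real.sqrt_eq_rpow, ← Real.rpow_natCast, ← Real.rpow_mul (Nat.cast_nonneg d)]
    norm_num
  have hsi_abs : |s i| = 1 := by rcases hs i with h | h <;> simp [h]
  rw [herror, abs_div, abs_mul, hsi_abs, mul_one, abs_of_pos (by positivity : 0 < 2 * c),
    div_le_iff₀ (by positivity)]
  calc _ ≤ M * (c * √(d : ℝ)) ^ 3 / 3 := htaylor
    _ = M * (d : ℝ) ^ ((3 : ℝ) / 2) / 6 * c ^ 2 * (2 * c) := by rw [mul_pow, hpow]; ring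

/-- Mean-squared error bound for the SPSA gradient estimator with constant
sensitivity parameter `c`: it is controlled by the squared off-coordinate
partial derivatives plus a Taylor remainder term of order `c²`. -/
theorem spsa_estimator_mse_bound
    {Ω : Type*} [MeasurableSpace Ω] (μ : Measure Ω) [IsProbabilityMeasure μ]
    {d : ℕ} (F : EuclideanSpace ℝ (Fin d) → ℝ) (hF : ContDiff ℝ 3 F)
    (M : ℝ) (hM : ∀ y, ‖iteratedFDeriv ℝ 3 F y‖ ≤ M)
    (c : ℝ) (hc : 0 < c) (i : Fin d)
    (Δ : Fin d → Ω → ℝ) (hmeas : ∀ j, Measurable (Δ j))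
    (hindep : iIndepFun Δ μ)
    (hval : ∀ j ω, Δ j ω = 1 ∨ Δ j ω = -1)
    (hsym : ∀ j, μ {ω | Δ j ω = 1} = 1 / 2)
    (x : EuclideanSpace ℝ (Fin d)) :
    ∫ ω, ((F (x + c • (WithLp.equiv 2 (Fin d → ℝ)).symm fun j => Δ j ω) -
          F (x - c • (WithLp.equiv 2 (Fin d → ℝ)).symm fun j => Δ j ω)) /
            (2 * c * Δ i ω) -
        fderiv ℝ F x (EuclideanSpace.single i 1)) ^ 2 ∂μ
      ≤ (Real.sqrt (∑ j ∈ Finset.univ.erase i,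
            (fderiv ℝ F x (EuclideanSpace.single j 1)) ^ 2) +
          M * (d : ℝ) ^ ((3 : ℝ) / 2) / 6 * c ^ 2) ^ 2 := by
  classical
  set a : Fin d → ℝ := fun j => fderiv ℝ F x (EuclideanSpace.single j 1)
  set A : Ω → ℝ := fun ω => Δ i ω * ∑ j ∈ Finset.univ.erase i, a j * Δ j ω
  have hΔ_memLp (j : Fin d) : MemLp (Δ j) 2 μ := memLp_of_sign (hmeas j) (hval j) 2
  have hA_sq (ω : Ω) : A ω ^ 2 = (∑ j ∈ Finset.univ.erase i, a j * Δ j ω) ^ 2 := by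
    rw [mul_pow]
    rcases hval i ω with h | h <;> rw [h] <;> norm_num
  have hA_memLp : MemLp A 2 μ := by
    refine (memLp_two_iff_integrable_sq (by fun_prop)).2 ?_
    simp_rw [hA_sq]
    exact (memLp_finsetSum _ fun j _ => (hΔ_memLp j).const_mul (a j)).integrable_sq
  have hA_moment : ∫ ω, A ω ^ 2 ∂μ = ∑ j ∈ Finset.univ.erase i, a j ^ 2 := by
    simp_rw [hA_sq]
    exact integral_sq_sum_mul_eq_sum_sq _ a hΔ_memLp
      (integral_mul_eq_ite_of_iIndepFun hmeas hindep hval hsym)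
  calc _ ≤ (√(∫ ω, A ω ^ 2 ∂μ) + M * (d : ℝ) ^ ((3 : ℝ) / 2) / 6 * c ^ 2) ^ 2 :=
        integral_sq_le_of_abs_sub_le hA_memLp fun ω =>
          abs_spsa_estimator_sub_le hF hM hc i x (hval · ω)
    _ = _ := by rw [hA_moment]
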